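/- Let (M,g) be a Riemannian manifold, X a vector field, and consider the horizontal lift ^H X to T(M) with the Cheeger–Gromoll metric. The covariant derivative of ^H X in the adapted frame is given by the block matrix with entries (∇_i X^h, −(1/2α)R^{h·}_{·mki} y^k X^m; −(1/2)R^h_{imk} y^k X^m, 0). Consequently, ^H X is parallel on T(M) if and only if X is parallel on M. -/

import Mathlib

open scoped BigOperators

noncomputable section

/-- Partial derivative of a scalar function on ℝⁿ in coordinate direction `k`. -/
def pd {n : ℕ} (f : (Fin n → ℝ) → ℝ) (k : Fin n) (x : Fin n → ℝ) : ℝ :=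
  fderiv ℝ f x (Pi.single k 1)

variable {n : ℕ}

/-- Christoffel symbols `Γ^h_{ji}` of the metric `g` with inverse `ginv`. -/
def christoffel (g ginv : (Fin n → ℝ) → Fin n → Fin n → ℝ) (h j i : Fin n)
    (x : Fin n → ℝ) : ℝ :=
  (1 / 2) * ∑ m, ginv x h m *
    (pd (fun z => g z m i) j x + pd (fun z => g z m j) i x - pd (fun z => g z j i) m x)

/-- Riemann curvature tensor `R^h_{ijk}` of the Levi-Civita connection of `g`. -/
def riemann (g ginv : (Fin n → ℝ) → Fin n → Fin n → ℝ) (h i j k : Fin n)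
    (x : Fin n → ℝ) : ℝ :=
  pd (fun z => christoffel g ginv h j k z) i x
    - pd (fun z => christoffel g ginv h i k z) j x
    + (∑ m, christoffel g ginv h i m x * christoffel g ginv m j k x)
    - ∑ m, christoffel g ginv h j m x * christoffel g ginv m i k x

/-- `R^{h·}_{·jki} = g^{ht} g_{is} R^s_{tjk}` (curvature with raised/lowered indices). -/
def Rdot (g ginv : (Fin n → ℝ) → Fin n → Fin n → ℝ) (h j k i : Fin n)
    (x : Fin n → ℝ) : ℝ :=
  ∑ t, ∑ s, ginv x h t * g x i s * riemann g ginv s t j k x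

/-- Covariant derivative `∇_i X^h` of a vector field. -/
def covDeriv (g ginv : (Fin n → ℝ) → Fin n → Fin n → ℝ)
    (X : (Fin n → ℝ) → Fin n → ℝ) (i h : Fin n) (x : Fin n → ℝ) : ℝ :=
  pd (fun z => X z h) i x + ∑ m, christoffel g ginv h i m x * X x m

/-- Covariant derivative `∇_i ω_j` of a covector field. -/
def covDerivCo (g ginv : (Fin n → ℝ) → Fin n → Fin n → ℝ)
    (ω : (Fin n → ℝ) → Fin n → ℝ) (i j : Fin n) (x : Fin n → ℝ) : ℝ :=
  pd (fun z => ω z j) i x - ∑ m, christoffel g ginv m i j x * ω x m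

/-- Second covariant derivative `∇_i ∇_j ω_k` of a covector field. -/
def covDeriv2Co (g ginv : (Fin n → ℝ) → Fin n → Fin n → ℝ)
    (ω : (Fin n → ℝ) → Fin n → ℝ) (i j k : Fin n) (x : Fin n → ℝ) : ℝ :=
  pd (fun z => covDerivCo g ginv ω j k z) i x
    - (∑ m, christoffel g ginv m i j x * covDerivCo g ginv ω m k x)
    - ∑ m, christoffel g ginv m i k x * covDerivCo g ginv ω j m x

/-- Covariant derivative `∇_j R^h_{ikm}` of the Riemann curvature tensor. -/
def covDerivR (g ginv : (Fin n → ℝ) → Fin n → Fin n → ℝ) (j h i k m : Fin n)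
    (x : Fin n → ℝ) : ℝ :=
  pd (fun z => riemann g ginv h i k m z) j x
    + (∑ s, christoffel g ginv h j s x * riemann g ginv s i k m x)
    - (∑ s, christoffel g ginv s j i x * riemann g ginv h s k m x)
    - (∑ s, christoffel g ginv s j k x * riemann g ginv h i s m x)
    - ∑ s, christoffel g ginv s j m x * riemann g ginv h i k s x

/-- `α = 1 + g_{st} y^s y^t`. -/
def alpha (g : (Fin n → ℝ) → Fin n → Fin n → ℝ) (x y : Fin n → ℝ) : ℝ :=
  1 + ∑ s, ∑ t, g x s t * y s * y t

/-- `y_j = g_{js} y^s`. -/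
def ylow (g : (Fin n → ℝ) → Fin n → Fin n → ℝ) (x y : Fin n → ℝ) (j : Fin n) : ℝ :=
  ∑ s, g x j s * y s

/-- Kronecker delta. -/
def kron (i j : Fin n) : ℝ := if i = j then 1 else 0

/-- Base-direction partial derivative of a function on `T(M) = ℝⁿ × ℝⁿ`. -/
def pdx (f : (Fin n → ℝ) → (Fin n → ℝ) → ℝ) (i : Fin n) (x y : Fin n → ℝ) : ℝ :=
  fderiv ℝ (fun z => f z y) x (Pi.single i 1)

/-- Fiber-direction partial derivative of a function on `T(M) = ℝⁿ × ℝⁿ`. -/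
def pdy (f : (Fin n → ℝ) → (Fin n → ℝ) → ℝ) (i : Fin n) (x y : Fin n → ℝ) : ℝ :=
  fderiv ℝ (fun w => f x w) y (Pi.single i 1)

/-- Derivative along the horizontal adapted-frame field
`X_(i) = ∂_i − Γ^m_{is} y^s ∂_{m̄}`. -/
def Dh (g ginv : (Fin n → ℝ) → Fin n → Fin n → ℝ)
    (f : (Fin n → ℝ) → (Fin n → ℝ) → ℝ) (i : Fin n) (x y : Fin n → ℝ) : ℝ :=
  pdx f i x y - ∑ m, (∑ s, christoffel g ginv m i s x * y s) * pdy f m x y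

/-- Formula (2): `^{CG}Γ^{h̄}_{ji} = −(1/2) R^h_{jik} y^k`. -/
def CGΓhhV (g ginv : (Fin n → ℝ) → Fin n → Fin n → ℝ) (h j i : Fin n)
    (x y : Fin n → ℝ) : ℝ :=
  -(1 / 2) * ∑ k, riemann g ginv h j i k x * y k

/-- Formula (2): `^{CG}Γ^h_{j ī} = −(1/(2α)) R^{h·}_{·jki} y^k`. -/
def CGΓhVh (g ginv : (Fin n → ℝ) → Fin n → Fin n → ℝ) (h j i : Fin n)
    (x y : Fin n → ℝ) : ℝ :=
  -(1 / (2 * alpha g x y)) * ∑ k, Rdot g ginv h j k i x * y k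

/-- Formula (2): `^{CG}Γ^h_{j̄ i} = −(1/(2α)) R^{h·}_{·ikj} y^k`. -/
def CGΓVhh (g ginv : (Fin n → ℝ) → Fin n → Fin n → ℝ) (h j i : Fin n)
    (x y : Fin n → ℝ) : ℝ :=
  -(1 / (2 * alpha g x y)) * ∑ k, Rdot g ginv h i k j x * y k

/-- Formula (2): `^{CG}Γ^{h̄}_{j̄ ī}
  = −(1/α)(y_j δ^h_i + y_i δ^h_j) + ((1+α)/α) g_{ji} y^h − (1/α) y_j y_i y^h`. -/
def CGΓVVV (g : (Fin n → ℝ) → Fin n → Fin n → ℝ) (h j i : Fin n)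
    (x y : Fin n → ℝ) : ℝ :=
  -(1 / alpha g x y) * (ylow g x y j * kron i h + ylow g x y i * kron j h)
    + ((1 + alpha g x y) / alpha g x y) * g x j i * y h
    - (1 / alpha g x y) * ylow g x y j * ylow g x y i * y h

/-- Formula (3): `∇_i F^h` for a vector field on `T(M)` with adapted-frame components
`(F, Fv)`. -/
def CGnabla_hh (g ginv : (Fin n → ℝ) → Fin n → Fin n → ℝ)
    (F Fv : Fin n → (Fin n → ℝ) → (Fin n → ℝ) → ℝ) (i h : Fin n) (x y : Fin n → ℝ) : ℝ :=
  Dh g ginv (F h) i x y + (∑ m, christoffel g ginv h i m x * F m x y)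
    + ∑ m, CGΓhVh g ginv h i m x y * Fv m x y

/-- Formula (3): `∇_i F^{h̄}`. -/
def CGnabla_hv (g ginv : (Fin n → ℝ) → Fin n → Fin n → ℝ)
    (F Fv : Fin n → (Fin n → ℝ) → (Fin n → ℝ) → ℝ) (i h : Fin n) (x y : Fin n → ℝ) : ℝ :=
  Dh g ginv (Fv h) i x y + (∑ m, CGΓhhV g ginv h i m x y * F m x y)
    + ∑ m, christoffel g ginv h i m x * Fv m x y

/-- Formula (3): `∇_{ī} F^h`. -/
def CGnabla_vh (g ginv : (Fin n → ℝ) → Fin n → Fin n → ℝ)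
    (F Fv : Fin n → (Fin n → ℝ) → (Fin n → ℝ) → ℝ) (i h : Fin n) (x y : Fin n → ℝ) : ℝ :=
  pdy (F h) i x y + ∑ m, CGΓVhh g ginv h i m x y * F m x y

/-- Formula (3): `∇_{ī} F^{h̄}`. -/
def CGnabla_vv (g ginv : (Fin n → ℝ) → Fin n → Fin n → ℝ)
    (F Fv : Fin n → (Fin n → ℝ) → (Fin n → ℝ) → ℝ) (i h : Fin n) (x y : Fin n → ℝ) : ℝ :=
  pdy (Fv h) i x y + ∑ m, CGΓVVV g h i m x y * Fv m x y
/-! ### Auxiliary lemmas -/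

section AuxCalc

variable {n : ℕ}

theorem pd_contDiff {f : (Fin n → ℝ) → ℝ} (hf : ContDiff ℝ (⊤ : ℕ∞) f) (k : Fin n) :
    ContDiff ℝ (⊤ : ℕ∞) fun x => pd f k x :=
  (hf.fderiv_right (by simp)).clm_apply contDiff_const

theorem pd_congr {f g : (Fin n → ℝ) → ℝ} (h : ∀ x, f x = g x) (k : Fin n) (x : Fin n → ℝ) :
    pd f k x = pd g k x := by
  have : f = g := funext h
  rw [this]

theorem pd_add {f g : (Fin n → ℝ) → ℝ} (hf : Differentiable ℝ f) (hg : Differentiable ℝ g)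
    (k : Fin n) (x : Fin n → ℝ) :
    pd (fun x => f x + g x) k x = pd f k x + pd g k x := by
  simp [pd, fderiv_fun_add (hf x) (hg x)]

theorem pd_neg (f : (Fin n → ℝ) → ℝ) (k : Fin n) (x : Fin n → ℝ) :
    pd (fun x => -f x) k x = -pd f k x := by
  simp [pd, fderiv_neg]

theorem pd_mul {f g : (Fin n → ℝ) → ℝ} (hf : Differentiable ℝ f) (hg : Differentiable ℝ g)
    (k : Fin n) (x : Fin n → ℝ) :
    pd (fun x => f x * g x) k x = pd f k x * g x + f x * pd g k x := by
  simp [pd, fderiv_fun_mul (hf x) (hg x)]; ring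

theorem pd_sum {ι : Type*} (s : Finset ι) (f : ι → (Fin n → ℝ) → ℝ)
    (hf : ∀ i ∈ s, Differentiable ℝ (f i)) (k : Fin n) (x : Fin n → ℝ) :
    pd (fun x => ∑ i ∈ s, f i x) k x = ∑ i ∈ s, pd (f i) k x := by
  simp only [pd]
  rw [fderiv_fun_sum (fun i hi => (hf i hi) x)]
  simp

theorem pd_symm {f : (Fin n → ℝ) → ℝ} (hf : ContDiff ℝ (⊤ : ℕ∞) f) (i j : Fin n) (x : Fin n → ℝ) :
    pd (pd f j) i x = pd (pd f i) j x := by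
  have h2 : IsSymmSndFDerivAt ℝ f x := (hf.contDiffAt).isSymmSndFDerivAt (by rw [minSmoothness_of_isRCLikeNormedField]; exact WithTop.coe_le_coe.mpr le_top)
  have hd : ∀ y, DifferentiableAt ℝ (fderiv ℝ f) y := fun y =>
    ((hf.fderiv_right (m := (⊤ : ℕ∞)) (by simp)).differentiable (by simp)) y
  have key : ∀ v w : Fin n → ℝ,
      fderiv ℝ (fun y => fderiv ℝ f y v) x w = fderiv ℝ (fderiv ℝ f) x w v := by
    intro v w
    rw [fderiv_clm_apply (hd x) (differentiableAt_const v)]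
    simp
  have e1 : pd f j = fun y => fderiv ℝ f y (Pi.single j 1) := rfl
  have e2 : pd f i = fun y => fderiv ℝ f y (Pi.single i 1) := rfl
  simp only [pd, e1, e2]
  rw [key, key, h2]

end AuxCalc

section AuxGeom

variable {n : ℕ} (g ginv : (Fin n → ℝ) → Fin n → Fin n → ℝ)

theorem christoffel_contDiff (hgsmooth : ∀ i j, ContDiff ℝ (⊤ : ℕ∞) fun x => g x i j)
    (hginvsmooth : ∀ i j, ContDiff ℝ (⊤ : ℕ∞) fun x => ginv x i j) (h j i : Fin n) :
    ContDiff ℝ (⊤ : ℕ∞) fun x => christoffel g ginv h j i x := by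
  unfold christoffel
  exact contDiff_const.mul (ContDiff.sum fun m _ => (hginvsmooth h m).mul
    (((pd_contDiff (hgsmooth m i) j).add (pd_contDiff (hgsmooth m j) i)).sub
      (pd_contDiff (hgsmooth j i) m)))

theorem christoffel_symm (hgsymm : ∀ x i j, g x i j = g x j i) (h j i : Fin n)
    (x : Fin n → ℝ) :
    christoffel g ginv h j i x = christoffel g ginv h i j x := by
  unfold christoffel
  congr 1
  refine Finset.sum_congr rfl fun m _ => ?_
  rw [pd_congr (fun z => hgsymm z j i) m x, pd_congr (fun z => hgsymm z m j) i x,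
    pd_congr (fun z => hgsymm z m i) j x]
  ring

theorem ginv_right (hginv : ∀ x i j, (∑ m, ginv x i m * g x m j) = if i = j then (1 : ℝ) else 0)
    (x : Fin n → ℝ) (i j : Fin n) :
    (∑ m, g x i m * ginv x m j) = if i = j then (1 : ℝ) else 0 := by
  have h1 : (Matrix.of (fun a b => ginv x a b)) * (Matrix.of (fun a b => g x a b)) = 1 := by
    ext a b
    simp [Matrix.mul_apply, hginv x a b, Matrix.one_apply]
  have h2 := mul_eq_one_comm.mp h1
  have := congrFun (congrFun h2 i) j
  simpa [Matrix.mul_apply, Matrix.one_apply] using this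

end AuxGeom
section AuxGeom2

variable {n : ℕ} (g ginv : (Fin n → ℝ) → Fin n → Fin n → ℝ)

/-- Christoffel symbols with lowered index: `Γ_{a,bc} = g_{as} Γ^s_{bc}`. -/
def Γl (a b c : Fin n) (x : Fin n → ℝ) : ℝ :=
  ∑ s, g x a s * christoffel g ginv s b c x

theorem sumDelta (E : Fin n → ℝ) (a : Fin n) :
    (∑ m, (if a = m then (1:ℝ) else 0) * E m) = E a := by simp

theorem Γl_eq (hginv : ∀ x i j, (∑ m, ginv x i m * g x m j) = if i = j then (1 : ℝ) else 0)
    (a b c : Fin n) (x : Fin n → ℝ) :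
    Γl g ginv a b c x = (1/2) * (pd (fun z => g z a c) b x + pd (fun z => g z a b) c x
      - pd (fun z => g z b c) a x) := by
  simp only [Γl, christoffel]
  set E : Fin n → ℝ := fun m => pd (fun z => g z m c) b x + pd (fun z => g z m b) c x
      - pd (fun z => g z b c) m x with hE
  have step1 : (∑ s, g x a s * (1 / 2 * ∑ m, ginv x s m * E m))
      = ∑ m, (∑ s, g x a s * ginv x s m) * (1/2 * E m) := by
    simp only [Finset.mul_sum]
    rw [Finset.sum_comm]
    refine Finset.sum_congr rfl fun m _ => ?_
    rw [Finset.sum_mul]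
    exact Finset.sum_congr rfl fun s _ => by ring
  rw [step1]
  have step2 : ∀ m, (∑ s, g x a s * ginv x s m) = if a = m then (1:ℝ) else 0 := fun m =>
    ginv_right g ginv hginv x a m
  simp only [step2]
  rw [sumDelta (fun m => 1/2 * E m) a]

theorem dg_eq (hgsymm : ∀ x i j, g x i j = g x j i)
    (hginv : ∀ x i j, (∑ m, ginv x i m * g x m j) = if i = j then (1 : ℝ) else 0)
    (a b m : Fin n) (x : Fin n → ℝ) :
    pd (fun z => g z a b) m x = Γl g ginv a m b x + Γl g ginv b m a x := by
  rw [Γl_eq g ginv hginv, Γl_eq g ginv hginv]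
  rw [pd_congr (fun z => hgsymm z b m) a x, pd_congr (fun z => hgsymm z b a) m x,
    pd_congr (fun z => hgsymm z m a) b x]
  ring

theorem Γl_contDiff (hgsmooth : ∀ i j, ContDiff ℝ (⊤ : ℕ∞) fun x => g x i j)
    (hginvsmooth : ∀ i j, ContDiff ℝ (⊤ : ℕ∞) fun x => ginv x i j) (a b c : Fin n) :
    ContDiff ℝ (⊤ : ℕ∞) fun x => Γl g ginv a b c x := by
  unfold Γl
  exact ContDiff.sum fun s _ => (hgsmooth a s).mul
    (christoffel_contDiff g ginv hgsmooth hginvsmooth s b c)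

theorem riemann_antisym (h i j k : Fin n) (x : Fin n → ℝ) :
    riemann g ginv h i j k x = -riemann g ginv h j i k x := by
  unfold riemann; ring

theorem riemann_bianchi (hgsymm : ∀ x i j, g x i j = g x j i) (h i j k : Fin n)
    (x : Fin n → ℝ) :
    riemann g ginv h i j k x + riemann g ginv h j k i x + riemann g ginv h k i j x = 0 := by
  unfold riemann
  rw [pd_congr (fun z => christoffel_symm g ginv hgsymm h k j z) i x,
      pd_congr (fun z => christoffel_symm g ginv hgsymm h i k z) j x,
      pd_congr (fun z => christoffel_symm g ginv hgsymm h j i z) k x]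
  have e1 : (∑ m, christoffel g ginv h k m x * christoffel g ginv m j i x)
      = ∑ m, christoffel g ginv h k m x * christoffel g ginv m i j x :=
    Finset.sum_congr rfl fun m _ => by rw [christoffel_symm g ginv hgsymm m j i x]
  have e2 : (∑ m, christoffel g ginv h i m x * christoffel g ginv m k j x)
      = ∑ m, christoffel g ginv h i m x * christoffel g ginv m j k x :=
    Finset.sum_congr rfl fun m _ => by rw [christoffel_symm g ginv hgsymm m k j x]
  have e3 : (∑ m, christoffel g ginv h j m x * christoffel g ginv m i k x)
      = ∑ m, christoffel g ginv h j m x * christoffel g ginv m k i x :=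
    Finset.sum_congr rfl fun m _ => by rw [christoffel_symm g ginv hgsymm m i k x]
  rw [e1, e2, e3]
  ring

end AuxGeom2
section AuxGeom3

variable {n : ℕ} (g ginv : (Fin n → ℝ) → Fin n → Fin n → ℝ)

theorem pairing_symm (hgsymm : ∀ x i j, g x i j = g x j i) (a b c d : Fin n) (x : Fin n → ℝ) :
    (∑ l, Γl g ginv l a b x * christoffel g ginv l c d x)
      = ∑ l, Γl g ginv l c d x * christoffel g ginv l a b x := by
  simp only [Γl, Finset.sum_mul]
  rw [Finset.sum_comm]
  refine Finset.sum_congr rfl fun l _ => Finset.sum_congr rfl fun s _ => ?_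
  rw [hgsymm x s l]
  ring

theorem riemann_lowered (hgsymm : ∀ x i j, g x i j = g x j i)
    (hgsmooth : ∀ i j, ContDiff ℝ (⊤ : ℕ∞) fun x => g x i j)
    (hginv : ∀ x i j, (∑ m, ginv x i m * g x m j) = if i = j then (1 : ℝ) else 0)
    (hginvsmooth : ∀ i j, ContDiff ℝ (⊤ : ℕ∞) fun x => ginv x i j)
    (h i j k : Fin n) (x : Fin n → ℝ) :
    (∑ l, g x h l * riemann g ginv l i j k x)
      = pd (fun z => Γl g ginv h j k z) i x - pd (fun z => Γl g ginv h i k z) j x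
        - (∑ l, Γl g ginv l i h x * christoffel g ginv l j k x)
        + ∑ l, Γl g ginv l j h x * christoffel g ginv l i k x := by
  have hgd : ∀ a b, Differentiable ℝ fun z => g z a b := fun a b =>
    (hgsmooth a b).differentiable (by simp)
  have hΓd : ∀ a b c, Differentiable ℝ fun z => christoffel g ginv a b c z := fun a b c =>
    (christoffel_contDiff g ginv hgsmooth hginvsmooth a b c).differentiable (by simp)
  have hpdΓl : ∀ (a b : Fin n),
      pd (fun z => Γl g ginv h a b z) i x = 0 → True := fun _ _ _ => trivial
  -- expansion of pd of Γl
  have key : ∀ (p : Fin n) (a b : Fin n),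
      pd (fun z => Γl g ginv h a b z) p x
        = (∑ l, pd (fun z => g z h l) p x * christoffel g ginv l a b x)
          + ∑ l, g x h l * pd (fun z => christoffel g ginv l a b z) p x := by
    intro p a b
    have e : (fun z => Γl g ginv h a b z)
        = fun z => ∑ l, g z h l * christoffel g ginv l a b z := rfl
    rw [e, pd_sum Finset.univ (fun l z => g z h l * christoffel g ginv l a b z) (fun l _ => (hgd h l).mul (hΓd l a b)) p x]
    rw [← Finset.sum_add_distrib]
    exact Finset.sum_congr rfl fun l _ => pd_mul (hgd h l) (hΓd l a b) p x
  have dg : ∀ (p l : Fin n), pd (fun z => g z h l) p x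
      = Γl g ginv h p l x + Γl g ginv l p h x := fun p l => dg_eq g ginv hgsymm hginv h l p x
  have T1 : (∑ l, g x h l * pd (fun z => christoffel g ginv l j k z) i x)
      = pd (fun z => Γl g ginv h j k z) i x
        - ∑ l, (Γl g ginv h i l x + Γl g ginv l i h x) * christoffel g ginv l j k x := by
    rw [key i j k]
    have e2 : (∑ l, pd (fun z => g z h l) i x * christoffel g ginv l j k x)
        = ∑ l, (Γl g ginv h i l x + Γl g ginv l i h x) * christoffel g ginv l j k x :=
      Finset.sum_congr rfl fun l _ => by rw [dg i l]
    rw [← e2]; ring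
  have T2 : (∑ l, g x h l * pd (fun z => christoffel g ginv l i k z) j x)
      = pd (fun z => Γl g ginv h i k z) j x
        - ∑ l, (Γl g ginv h j l x + Γl g ginv l j h x) * christoffel g ginv l i k x := by
    rw [key j i k]
    have e2 : (∑ l, pd (fun z => g z h l) j x * christoffel g ginv l i k x)
        = ∑ l, (Γl g ginv h j l x + Γl g ginv l j h x) * christoffel g ginv l i k x :=
      Finset.sum_congr rfl fun l _ => by rw [dg j l]
    rw [← e2]; ring
  have T3 : (∑ l, g x h l * ∑ m, christoffel g ginv l i m x * christoffel g ginv m j k x)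
      = ∑ m, Γl g ginv h i m x * christoffel g ginv m j k x := by
    simp only [Finset.mul_sum]
    rw [Finset.sum_comm]
    refine Finset.sum_congr rfl fun m _ => ?_
    simp only [Γl, Finset.sum_mul]
    exact Finset.sum_congr rfl fun l _ => by ring
  have T4 : (∑ l, g x h l * ∑ m, christoffel g ginv l j m x * christoffel g ginv m i k x)
      = ∑ m, Γl g ginv h j m x * christoffel g ginv m i k x := by
    simp only [Finset.mul_sum]
    rw [Finset.sum_comm]
    refine Finset.sum_congr rfl fun m _ => ?_
    simp only [Γl, Finset.sum_mul]
    exact Finset.sum_congr rfl fun l _ => by ring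
  have expand : (∑ l, g x h l * riemann g ginv l i j k x)
      = (∑ l, g x h l * pd (fun z => christoffel g ginv l j k z) i x)
        - (∑ l, g x h l * pd (fun z => christoffel g ginv l i k z) j x)
        + (∑ l, g x h l * ∑ m, christoffel g ginv l i m x * christoffel g ginv m j k x)
        - ∑ l, g x h l * ∑ m, christoffel g ginv l j m x * christoffel g ginv m i k x := by
    simp only [riemann, mul_sub, mul_add, Finset.sum_sub_distrib, Finset.sum_add_distrib]
  rw [expand, T1, T2, T3, T4]
  simp only [add_mul, Finset.sum_add_distrib]
  ring
end AuxGeom3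
section AuxGeom4

variable {n : ℕ} (g ginv : (Fin n → ℝ) → Fin n → Fin n → ℝ)

theorem riemann_lowered_antisym (hgsymm : ∀ x i j, g x i j = g x j i)
    (hgsmooth : ∀ i j, ContDiff ℝ (⊤ : ℕ∞) fun x => g x i j)
    (hginv : ∀ x i j, (∑ m, ginv x i m * g x m j) = if i = j then (1 : ℝ) else 0)
    (hginvsmooth : ∀ i j, ContDiff ℝ (⊤ : ℕ∞) fun x => ginv x i j)
    (h i j k : Fin n) (x : Fin n → ℝ) :
    (∑ l, g x h l * riemann g ginv l i j k x)
      = -(∑ l, g x k l * riemann g ginv l i j h x) := by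
  have hΓld : ∀ a b c, Differentiable ℝ fun z => Γl g ginv a b c z := fun a b c =>
    (Γl_contDiff g ginv hgsmooth hginvsmooth a b c).differentiable (by simp)
  -- `Γl_{a,pb} + Γl_{b,pa} = ∂_p g_{ab}` as functions
  have sumΓl : ∀ (a b p : Fin n) (z : Fin n → ℝ),
      Γl g ginv a p b z + Γl g ginv b p a z = pd (fun w => g w a b) p z := fun a b p z =>
    (dg_eq g ginv hgsymm hginv a b p z).symm
  -- second-derivative terms
  have D : ∀ p q : Fin n,
      pd (fun z => Γl g ginv h p k z) q x + pd (fun z => Γl g ginv k p h z) q x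
        = pd (pd (fun w => g w h k) p) q x := by
    intro p q
    rw [← pd_add (hΓld h p k) (hΓld k p h) q x]
    exact pd_congr (fun z => sumΓl h k p z) q x
  have Dsymm : pd (pd (fun w => g w h k) j) i x = pd (pd (fun w => g w h k) i) j x :=
    pd_symm (hgsmooth h k) i j x
  have P1 : (∑ l, Γl g ginv l i h x * christoffel g ginv l j k x)
      = ∑ l, Γl g ginv l j k x * christoffel g ginv l i h x :=
    pairing_symm g ginv hgsymm i h j k x
  have P2 : (∑ l, Γl g ginv l j h x * christoffel g ginv l i k x)
      = ∑ l, Γl g ginv l i k x * christoffel g ginv l j h x :=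
    pairing_symm g ginv hgsymm j h i k x
  rw [riemann_lowered g ginv hgsymm hgsmooth hginv hginvsmooth h i j k x,
      riemann_lowered g ginv hgsymm hgsmooth hginv hginvsmooth k i j h x]
  have D1 := D j i
  have D2 := D i j
  rw [Dsymm] at D1
  linarith [P1, P2, D1, D2]

end AuxGeom4
section AuxRicci

variable {n : ℕ} (g ginv : (Fin n → ℝ) → Fin n → Fin n → ℝ)
  (X : (Fin n → ℝ) → Fin n → ℝ)

theorem ricci_contraction
    (hgsmooth : ∀ i j, ContDiff ℝ (⊤ : ℕ∞) fun x => g x i j)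
    (hginvsmooth : ∀ i j, ContDiff ℝ (⊤ : ℕ∞) fun x => ginv x i j)
    (hXsmooth : ∀ h, ContDiff ℝ (⊤ : ℕ∞) fun x => X x h)
    (hX0 : ∀ (x : Fin n → ℝ) (i h : Fin n), covDeriv g ginv X i h x = 0)
    (x : Fin n → ℝ) (h i k : Fin n) :
    (∑ m, riemann g ginv h i k m x * X x m) = 0 := by
  have hΓd : ∀ a b c, Differentiable ℝ fun z => christoffel g ginv a b c z := fun a b c =>
    (christoffel_contDiff g ginv hgsmooth hginvsmooth a b c).differentiable (by simp)
  have hXd : ∀ a, Differentiable ℝ fun z => X z a := fun a =>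
    (hXsmooth a).differentiable (by simp)
  have base : ∀ (a p : Fin n) (z : Fin n → ℝ),
      pd (fun w => X w a) p z = -∑ m, christoffel g ginv a p m z * X z m := by
    intro a p z
    have := hX0 z p a
    unfold covDeriv at this
    linarith
  have E : ∀ a b : Fin n,
      (∑ m, pd (fun z => christoffel g ginv h b m z) a x * X x m)
        = -pd (pd (fun w => X w h) b) a x
          + ∑ m, christoffel g ginv h b m x * ∑ s, christoffel g ginv m a s x * X x s := by
    intro a b
    have e1 : pd (pd (fun w => X w h) b) a x
        = pd (fun z => -∑ m, christoffel g ginv h b m z * X z m) a x :=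
      pd_congr (fun z => base h b z) a x
    have e2 : pd (fun z => -∑ m, christoffel g ginv h b m z * X z m) a x
        = -∑ m, pd (fun z => christoffel g ginv h b m z * X z m) a x := by
      have : (fun z => -∑ m, christoffel g ginv h b m z * X z m)
          = fun z => -(fun z' => ∑ m, christoffel g ginv h b m z' * X z' m) z := rfl
      rw [this, pd_neg, pd_sum _ (fun m z => christoffel g ginv h b m z * X z m) (fun m _ => (hΓd h b m).mul (hXd m)) a x]
    have e3 : ∀ m, pd (fun z => christoffel g ginv h b m z * X z m) a x
        = pd (fun z => christoffel g ginv h b m z) a x * X x m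
          + christoffel g ginv h b m x * pd (fun w => X w m) a x := fun m =>
      pd_mul (hΓd h b m) (hXd m) a x
    have e4 : (∑ m, pd (fun z => christoffel g ginv h b m z * X z m) a x)
        = (∑ m, pd (fun z => christoffel g ginv h b m z) a x * X x m)
          - ∑ m, christoffel g ginv h b m x * ∑ s, christoffel g ginv m a s x * X x s := by
      rw [eq_sub_iff_add_eq, ← Finset.sum_add_distrib]
      refine Finset.sum_congr rfl fun m _ => ?_
      rw [e3 m, base m a x]
      ring
    rw [e1, e2] at *
    linarith [e4]
  have swap : ∀ a b : Fin n,
      (∑ m, christoffel g ginv h a m x * ∑ s, christoffel g ginv m b s x * X x s)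
        = ∑ m, (∑ s, christoffel g ginv h a s x * christoffel g ginv s b m x) * X x m := by
    intro a b
    simp only [Finset.mul_sum, Finset.sum_mul]
    rw [Finset.sum_comm]
    exact Finset.sum_congr rfl fun m _ => Finset.sum_congr rfl fun s _ => by ring
  have hsymmX : pd (pd (fun w => X w h) k) i x = pd (pd (fun w => X w h) i) k x :=
    pd_symm (hXsmooth h) i k x
  have expand : (∑ m, riemann g ginv h i k m x * X x m)
      = (∑ m, pd (fun z => christoffel g ginv h k m z) i x * X x m)
        - (∑ m, pd (fun z => christoffel g ginv h i m z) k x * X x m)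
        + (∑ m, (∑ s, christoffel g ginv h i s x * christoffel g ginv s k m x) * X x m)
        - ∑ m, (∑ s, christoffel g ginv h k s x * christoffel g ginv s i m x) * X x m := by
    simp only [riemann, sub_mul, add_mul, Finset.sum_sub_distrib, Finset.sum_add_distrib]
  rw [expand, E i k, E k i, ← swap i k, ← swap k i, hsymmX]
  ring

end AuxRicci
section AuxParallel

variable {n : ℕ} (g ginv : (Fin n → ℝ) → Fin n → Fin n → ℝ)
  (X : (Fin n → ℝ) → Fin n → ℝ)

theorem curvature_contraction_zero
    (hgsymm : ∀ x i j, g x i j = g x j i)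
    (hgsmooth : ∀ i j, ContDiff ℝ (⊤ : ℕ∞) fun x => g x i j)
    (hginv : ∀ x i j, (∑ m, ginv x i m * g x m j) = if i = j then (1 : ℝ) else 0)
    (hginvsmooth : ∀ i j, ContDiff ℝ (⊤ : ℕ∞) fun x => ginv x i j)
    (hXsmooth : ∀ h, ContDiff ℝ (⊤ : ℕ∞) fun x => X x h)
    (hX0 : ∀ (x : Fin n → ℝ) (i h : Fin n), covDeriv g ginv X i h x = 0)
    (x : Fin n → ℝ) (h i k : Fin n) :
    (∑ m, riemann g ginv h i m k x * X x m) = 0 := by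
  set C : Fin n → Fin n → Fin n → ℝ := fun l a b =>
    ∑ m, (∑ s, g x l s * riemann g ginv s a m b x) * X x m with hC
  -- Ricci contraction, lowered form
  have ricciL : ∀ l a b : Fin n,
      (∑ m, (∑ s, g x l s * riemann g ginv s a b m x) * X x m) = 0 := by
    intro l a b
    have hz : ∀ s : Fin n, (∑ m, riemann g ginv s a b m x * X x m) = 0 := fun s =>
      ricci_contraction g ginv X hgsmooth hginvsmooth hXsmooth hX0 x s a b
    calc (∑ m, (∑ s, g x l s * riemann g ginv s a b m x) * X x m)
        = ∑ s, g x l s * ∑ m, riemann g ginv s a b m x * X x m := by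
          simp only [Finset.mul_sum, Finset.sum_mul]
          rw [Finset.sum_comm]
          exact Finset.sum_congr rfl fun m _ => Finset.sum_congr rfl fun s _ => by ring
      _ = 0 := by simp [hz]
  have rel1 : ∀ l a b : Fin n, C l a b = -C b a l := by
    intro l a b
    simp only [hC]
    rw [← Finset.sum_neg_distrib]
    refine Finset.sum_congr rfl fun m _ => ?_
    rw [riemann_lowered_antisym g ginv hgsymm hgsmooth hginv hginvsmooth l a m b x]
    ring
  have rel2 : ∀ l a b : Fin n, C l a b = C l b a := by
    intro l a b
    have key : ∀ m s : Fin n, riemann g ginv s a m b x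
        = riemann g ginv s b m a x - riemann g ginv s b a m x := by
      intro m s
      have hb := riemann_bianchi g ginv hgsymm s a m b x
      have ha := riemann_antisym g ginv s m b a x
      linarith
    have e1 : C l a b = C l b a - ∑ m, (∑ s, g x l s * riemann g ginv s b a m x) * X x m := by
      simp only [hC]
      rw [eq_sub_iff_add_eq, ← Finset.sum_add_distrib]
      refine Finset.sum_congr rfl fun m _ => ?_
      rw [← add_mul, ← Finset.sum_add_distrib]
      refine congrArg (· * X x m) (Finset.sum_congr rfl fun s _ => ?_)
      rw [key m s]
      ring
    rw [e1, ricciL l b a, sub_zero]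
  have Czero : ∀ l a b : Fin n, C l a b = 0 := by
    intro l a b
    have h1 := rel2 l a b
    have h2 := rel1 l b a
    have h3 := rel2 a b l
    have h4 := rel1 a l b
    have h5 := rel2 b l a
    have h6 := rel1 b a l
    linarith
  have collapse : ∀ m : Fin n,
      (∑ l, ginv x h l * ((∑ s, g x l s * riemann g ginv s i m k x) * X x m))
        = riemann g ginv h i m k x * X x m := by
    intro m
    calc (∑ l, ginv x h l * ((∑ s, g x l s * riemann g ginv s i m k x) * X x m))
        = ∑ s, (∑ l, ginv x h l * g x l s) * (riemann g ginv s i m k x * X x m) := by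
          simp only [Finset.mul_sum, Finset.sum_mul]
          rw [Finset.sum_comm]
          exact Finset.sum_congr rfl fun _ _ => Finset.sum_congr rfl fun _ _ => by ring
      _ = riemann g ginv h i m k x * X x m := by
          simp only [hginv]
          rw [sumDelta]
  have final : (∑ m, riemann g ginv h i m k x * X x m) = ∑ l, ginv x h l * C l i k := by
    simp only [hC, Finset.mul_sum]
    rw [Finset.sum_comm]
    exact Finset.sum_congr rfl fun m _ => (collapse m).symm
  rw [final]
  simp [Czero]

end AuxParallel
section Blocks

variable {n : ℕ} (g ginv : (Fin n → ℝ) → Fin n → Fin n → ℝ)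
  (X : (Fin n → ℝ) → Fin n → ℝ)

theorem block_hh (x y : Fin n → ℝ) (i h : Fin n) :
    CGnabla_hh g ginv (fun h z _ => X z h) (fun _ _ _ => 0) i h x y
      = covDeriv g ginv X i h x := by
  simp only [CGnabla_hh, Dh, pdx, pdy, covDeriv, pd, mul_zero, Finset.sum_const_zero,
    add_zero, fderiv_fun_const, Pi.zero_apply, ContinuousLinearMap.zero_apply, sub_zero]

theorem block_vh (x y : Fin n → ℝ) (i h : Fin n) :
    CGnabla_vh g ginv (fun h z _ => X z h) (fun _ _ _ => 0) i h x y
      = -(1 / (2 * alpha g x y)) * ∑ k, ∑ m, Rdot g ginv h m k i x * y k * X x m := by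
  simp only [CGnabla_vh, CGΓVhh, pdy, fderiv_fun_const, Pi.zero_apply,
    ContinuousLinearMap.zero_apply, zero_add]
  simp only [Finset.mul_sum, Finset.sum_mul, neg_mul, Finset.sum_neg_distrib]
  rw [Finset.sum_comm]
  exact neg_inj.mpr (Finset.sum_congr rfl fun k _ => Finset.sum_congr rfl fun m _ => by ring)

theorem block_hv (x y : Fin n → ℝ) (i h : Fin n) :
    CGnabla_hv g ginv (fun h z _ => X z h) (fun _ _ _ => 0) i h x y
      = -(1 / 2) * ∑ k, ∑ m, riemann g ginv h i m k x * y k * X x m := by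
  simp only [CGnabla_hv, CGΓhhV, Dh, pdx, pdy, fderiv_fun_const, Pi.zero_apply,
    ContinuousLinearMap.zero_apply, mul_zero, Finset.sum_const_zero, add_zero, sub_zero]
  rw [zero_add]
  simp only [Finset.mul_sum, Finset.sum_mul, neg_mul, Finset.sum_neg_distrib]
  rw [Finset.sum_comm]
  exact neg_inj.mpr (Finset.sum_congr rfl fun k _ => Finset.sum_congr rfl fun m _ => by ring)

theorem block_vv (x y : Fin n → ℝ) (i h : Fin n) :
    CGnabla_vv g ginv (fun h z _ => X z h) (fun _ _ _ => 0) i h x y = 0 := by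
  simp [CGnabla_vv, pdy]

end Blocks

/-- the adapted-frame covariant derivative of the horizontal lift `^H X`
(components `(X^h, 0)`) with respect to the Cheeger–Gromoll metric is the block matrix
`(∇_i X^h, −(1/2α) R^{h·}_{·mki} y^k X^m; −(1/2) R^h_{imk} y^k X^m, 0)`;
consequently `^H X` is parallel on `T(M)` iff `X` is parallel on `M`. -/
theorem horizontalLift_covDeriv_and_parallel_iff {n : ℕ}
    (g ginv : (Fin n → ℝ) → Fin n → Fin n → ℝ)
    (hgsymm : ∀ x i j, g x i j = g x j i)
    (hgsmooth : ∀ i j, ContDiff ℝ (⊤ : ℕ∞) fun x => g x i j)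
    (hgpos : ∀ (x : Fin n → ℝ) (v : Fin n → ℝ), v ≠ 0 → 0 < ∑ i, ∑ j, g x i j * v i * v j)
    (hginv : ∀ x i j, (∑ m, ginv x i m * g x m j) = if i = j then (1 : ℝ) else 0)
    (hginvsmooth : ∀ i j, ContDiff ℝ (⊤ : ℕ∞) fun x => ginv x i j)
    (X : (Fin n → ℝ) → Fin n → ℝ) (hXsmooth : ∀ h, ContDiff ℝ (⊤ : ℕ∞) fun x => X x h) :
    (∀ (x y : Fin n → ℝ) (i h : Fin n),
      CGnabla_hh g ginv (fun h z _ => X z h) (fun _ _ _ => 0) i h x y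
          = covDeriv g ginv X i h x ∧
      CGnabla_vh g ginv (fun h z _ => X z h) (fun _ _ _ => 0) i h x y
          = -(1 / (2 * alpha g x y)) * ∑ k, ∑ m, Rdot g ginv h m k i x * y k * X x m ∧
      CGnabla_hv g ginv (fun h z _ => X z h) (fun _ _ _ => 0) i h x y
          = -(1 / 2) * ∑ k, ∑ m, riemann g ginv h i m k x * y k * X x m ∧
      CGnabla_vv g ginv (fun h z _ => X z h) (fun _ _ _ => 0) i h x y = 0) ∧
    ((∀ (x y : Fin n → ℝ) (i h : Fin n),
        CGnabla_hh g ginv (fun h z _ => X z h) (fun _ _ _ => 0) i h x y = 0 ∧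
        CGnabla_vh g ginv (fun h z _ => X z h) (fun _ _ _ => 0) i h x y = 0 ∧
        CGnabla_hv g ginv (fun h z _ => X z h) (fun _ _ _ => 0) i h x y = 0 ∧
        CGnabla_vv g ginv (fun h z _ => X z h) (fun _ _ _ => 0) i h x y = 0)
      ↔ (∀ (x : Fin n → ℝ) (i h : Fin n), covDeriv g ginv X i h x = 0)) := by
  constructor
  · exact fun x y i h => ⟨block_hh g ginv X x y i h, block_vh g ginv X x y i h,
      block_hv g ginv X x y i h, block_vv g ginv X x y i h⟩
  · constructor
    · intro hb x i h
      rw [← block_hh g ginv X x 0 i h]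
      exact (hb x 0 i h).1
    · intro hX0 x y i h
      have hA : ∀ s t k : Fin n, (∑ m, riemann g ginv s t m k x * X x m) = 0 := fun s t k =>
        curvature_contraction_zero g ginv X hgsymm hgsmooth hginv hginvsmooth hXsmooth hX0 x s t k
      have hRdot : ∀ k : Fin n, (∑ m, Rdot g ginv h m k i x * X x m) = 0 := by
        intro k
        simp only [Rdot, Finset.sum_mul]
        rw [Finset.sum_comm]
        refine Finset.sum_eq_zero fun t _ => ?_
        rw [Finset.sum_comm]
        refine Finset.sum_eq_zero fun s _ => ?_
        have e : (∑ m, ginv x h t * g x i s * riemann g ginv s t m k x * X x m)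
            = ginv x h t * g x i s * ∑ m, riemann g ginv s t m k x * X x m := by
          rw [Finset.mul_sum]
          exact Finset.sum_congr rfl fun m _ => by ring
        rw [e, hA s t k, mul_zero]
      refine ⟨?_, ?_, ?_, block_vv g ginv X x y i h⟩
      · rw [block_hh g ginv X x y i h]
        exact hX0 x i h
      · rw [block_vh g ginv X x y i h]
        have e : ∀ k : Fin n, (∑ m, Rdot g ginv h m k i x * y k * X x m) = 0 := by
          intro k
          have e2 : (∑ m, Rdot g ginv h m k i x * y k * X x m)
              = y k * ∑ m, Rdot g ginv h m k i x * X x m := by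
            rw [Finset.mul_sum]
            exact Finset.sum_congr rfl fun m _ => by ring
          rw [e2, hRdot k, mul_zero]
        simp [e]
      · rw [block_hv g ginv X x y i h]
        have e : ∀ k : Fin n, (∑ m, riemann g ginv h i m k x * y k * X x m) = 0 := by
          intro k
          have e2 : (∑ m, riemann g ginv h i m k x * y k * X x m)
              = y k * ∑ m, riemann g ginv h i m k x * X x m := by
            rw [Finset.mul_sum]
            exact Finset.sum_congr rfl fun m _ => by ring
          rw [e2, hA h i k, mul_zero]
        simp [e]

end
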